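/- arXiv:1309.7506 — 3 statements merged into one kernel-verified Lean document; each statement's English description precedes it below -/
import Mathlib

section
/- For every finite partition of the positive integers into l classes, there exist an index i and positive integers x, y, z in class C_i such that x + y = z, x divides y, and x divides z. -/
/-!
Let `a 0 = 1` and `a (n + 1) = a n + (a n)!`. For `i < j ≤ k` the difference `a j - a i` is
positive and at most `a j`, so it divides every `(a m)!` with `m ≥ j`, hence divides
`a k - a j`. Colour the pair `i < j` by `c (a j - a i)`; Ramsey's theorem for triangles gives
`i < j < k` with all three pairs of one colour, and `x = a j - a i`, `y = a k - a j`,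
`z = a k - a i` are the required numbers.
-/

open Set Nat

theorem Set.Infinite.exists_infinite_fiber {α ι : Type*} [Finite ι] {S : Set α}
    (hS : S.Infinite) (g : α → ι) : ∃ i, {x ∈ S | g x = i}.Infinite := by
  by_contra! h
  exact hS ((finite_iUnion h).subset fun x hx => mem_iUnion.2 ⟨g x, hx, rfl⟩)

theorem Set.Infinite.exists_infinite_gt_fiber {ι : Type*} [Finite ι] {S : Set ℕ}
    (hS : S.Infinite) (f : ℕ → ℕ → ι) (v : ℕ) :
    ∃ i, {x ∈ S | v < x ∧ f v x = i}.Infinite := by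
  have hgt : {x ∈ S | v < x}.Infinite :=
    (hS.sdiff (finite_Iic v)).mono fun x hx => ⟨hx.1, not_le.1 hx.2⟩
  obtain ⟨i, hi⟩ := hgt.exists_infinite_fiber (f v)
  exact ⟨i, hi.mono fun x hx => ⟨hx.1.1, hx.1.2, hx.2⟩⟩

theorem exists_strictMono_color_eq_of_lt {ι : Type*} [Finite ι] (f : ℕ → ℕ → ι) :
    ∃ v : ℕ → ℕ, StrictMono v ∧ ∃ col : ℕ → ι, ∀ ⦃n m⦄, n < m → f (v n) (v m) = col n := by
  have step : ∀ S : {S : Set ℕ // S.Infinite},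
      ∃ v ∈ S.1, ∃ i, {x ∈ S.1 | v < x ∧ f v x = i}.Infinite := fun S =>
    ⟨_, S.2.nonempty.some_mem, S.2.exists_infinite_gt_fiber f _⟩
  choose vf hmem cf hinf using step
  let chain : ℕ → {S : Set ℕ // S.Infinite} := fun n =>
    Nat.rec ⟨univ, infinite_univ⟩ (fun _ S => ⟨{x ∈ S.1 | vf S < x ∧ f (vf S) x = cf S}, hinf S⟩) n
  have hanti : Antitone fun n => (chain n).1 := antitone_nat_of_succ_le fun _ _ hx => hx.1
  have hlt : ∀ ⦃n m⦄, n < m →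
      vf (chain n) < vf (chain m) ∧ f (vf (chain n)) (vf (chain m)) = cf (chain n) :=
    fun n m hnm => (hanti (succ_le_of_lt hnm) (hmem (chain m))).2
  exact ⟨fun n => vf (chain n), fun _ _ h => (hlt h).1, _, fun _ _ h => (hlt h).2⟩

theorem exists_monochromatic_triangle {ι : Type*} [Finite ι] (f : ℕ → ℕ → ι) :
    ∃ i j k, i < j ∧ j < k ∧ f i j = f j k ∧ f i j = f i k := by
  obtain ⟨v, hv, col, hcol⟩ := exists_strictMono_color_eq_of_lt f
  have triangle : ∀ ⦃p q⦄, p < q → col p = col q →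
      ∃ i j k, i < j ∧ j < k ∧ f i j = f j k ∧ f i j = f i k := fun p q hpq hc =>
    ⟨v p, v q, v (q + 1), hv hpq, hv q.lt_succ_self,
      by rw [hcol hpq, hcol q.lt_succ_self, hc], by rw [hcol hpq, hcol (hpq.trans q.lt_succ_self)]⟩
  obtain ⟨p, q, hne, hc⟩ := Finite.exists_ne_map_eq_of_infinite col
  rcases hne.lt_or_gt with hpq | hqp
  exacts [triangle hpq hc, triangle hqp hc.symm]

def addFactorialSeq : ℕ → ℕ
  | 0 => 1
  | n + 1 => addFactorialSeq n + (addFactorialSeq n)!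

theorem addFactorialSeq_strictMono : StrictMono addFactorialSeq :=
  strictMono_nat_of_lt_succ fun _ => Nat.lt_add_of_pos_right (factorial_pos _)

theorem factorial_addFactorialSeq_dvd_sub {j k : ℕ} (hjk : j ≤ k) :
    (addFactorialSeq j)! ∣ addFactorialSeq k - addFactorialSeq j := by
  induction hjk with
  | refl => simp
  | @step k hjk ih =>
    have hle := addFactorialSeq_strictMono.monotone hjk
    have hsucc : addFactorialSeq (k + 1) - addFactorialSeq j =
        addFactorialSeq k - addFactorialSeq j + (addFactorialSeq k)! := by
      simp only [addFactorialSeq]; omega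
    rw [hsucc]
    exact dvd_add ih (factorial_dvd_factorial hle)

theorem addFactorialSeq_sub_dvd_sub {i j k : ℕ} (hij : i < j) (hjk : j ≤ k) :
    addFactorialSeq j - addFactorialSeq i ∣ addFactorialSeq k - addFactorialSeq j :=
  (dvd_factorial (Nat.sub_pos_of_lt (addFactorialSeq_strictMono hij)) (Nat.sub_le _ _)).trans
    (factorial_addFactorialSeq_dvd_sub hjk)

theorem stmt_4 (l : ℕ) (c : ℕ → Fin l) :
    ∃ x y z : ℕ, 0 < x ∧ 0 < y ∧ 0 < z ∧ x + y = z ∧ x ∣ y ∧ x ∣ z ∧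
      c x = c y ∧ c y = c z := by
  set a := addFactorialSeq
  obtain ⟨i, j, k, hij, hjk, hcol₁, hcol₂⟩ := exists_monochromatic_triangle fun i j => c (a j - a i)
  have hai : a i < a j := addFactorialSeq_strictMono hij
  have haj : a j < a k := addFactorialSeq_strictMono hjk
  have hsum : a j - a i + (a k - a j) = a k - a i := by omega
  have hdvd : a j - a i ∣ a k - a j := addFactorialSeq_sub_dvd_sub hij hjk.le
  exact ⟨a j - a i, a k - a j, a k - a i, by omega, by omega, by omega, hsum, hdvd,
    hsum ▸ dvd_add dvd_rfl hdvd, hcol₁, hcol₁.symm.trans hcol₂⟩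
end

section
/- For every positive integer k there is a constant c₀(k) such that: for every completely multiplicative function f : ℤ⁺ → ℂ whose values are all k-th roots of unity, there exists a positive integer a ≤ c₀(k) with f(a) = f(a+1) = 1. -/
/-!
Colour each pair `i < j` of indices by `f (v j - v i)`, where `v (n + 1) = v n + (v n)!`.
Ramsey's theorem for triangles gives `i < j < l` with `x = v j - v i`, `y = v l - v j` and
`x + y = v l - v i` of the same colour, and `x ∣ y` because `y` is a sum of factorials of
numbers `≥ x`. Writing `y = x * d`, complete multiplicativity turns `f x = f y = f (x + y)`
into `f d = f (d + 1) = 1`, since `f x` is a root of unity and hence nonzero.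
-/

open Finset
open scoped Nat

def triangleRamseyBound : ℕ → ℕ
  | 0 => 2
  | k + 1 => (k + 1) * triangleRamseyBound k + 1

lemma two_le_triangleRamseyBound (k : ℕ) : 2 ≤ triangleRamseyBound k := by
  induction k with
  | zero => rfl
  | succ k ih => simp only [triangleRamseyBound]; nlinarith

lemma exists_monochromatic_star {α : Type*} [DecidableEq α] (c : ℕ → ℕ → α) {k : ℕ}
    {s : Finset α} {V : Finset ℕ} (hs : #s ≤ k + 1)
    (hV : (k + 1) * triangleRamseyBound k + 1 ≤ #V)
    (hc : ∀ i ∈ V, ∀ j ∈ V, i < j → c i j ∈ s) :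
    ∃ x ∈ V, ∃ a ∈ s, ∃ S ⊆ V, triangleRamseyBound k ≤ #S ∧ ∀ j ∈ S, x < j ∧ c x j = a := by
  have hVne : V.Nonempty := card_pos.mp (by omega)
  set x := V.min' hVne
  have hx : x ∈ V := V.min'_mem hVne
  have hxlt : ∀ j ∈ V.erase x, x < j := fun j hj => V.min'_lt_of_mem_erase_min' hVne hj
  have hcx : ∀ j ∈ V.erase x, c x j ∈ s := fun j hj =>
    hc x hx j (mem_of_mem_erase hj) (hxlt j hj)
  have hcard : #(V.erase x) = #V - 1 := card_erase_of_mem hx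
  obtain ⟨j, hj⟩ : (V.erase x).Nonempty := by
    have := Nat.le_mul_of_pos_left (triangleRamseyBound k) (by omega : 0 < k + 1)
    have := two_le_triangleRamseyBound k
    exact card_pos.mp (by omega)
  obtain ⟨a, ha, hS⟩ := exists_le_card_fiber_of_mul_le_card_of_maps_to
    (n := triangleRamseyBound k) hcx ⟨c x j, hcx j hj⟩
    (by have := Nat.mul_le_mul_right (triangleRamseyBound k) hs; omega)
  refine ⟨x, hx, a, ha, _, fun j hj => mem_of_mem_erase (mem_of_mem_filter j hj), hS,
    fun j hj => ⟨hxlt j (mem_of_mem_filter j hj), (mem_filter.mp hj).2⟩⟩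

theorem exists_monochromatic_triangle_s9 {α : Type*} [DecidableEq α] (c : ℕ → ℕ → α) (k : ℕ)
    {s : Finset α} {V : Finset ℕ} (hs : #s ≤ k) (hV : triangleRamseyBound k ≤ #V)
    (hc : ∀ i ∈ V, ∀ j ∈ V, i < j → c i j ∈ s) :
    ∃ i ∈ V, ∃ j ∈ V, ∃ l ∈ V, i < j ∧ j < l ∧ c i j = c j l ∧ c i j = c i l := by
  induction k generalizing s V with
  | zero =>
    obtain ⟨i, hi, j, hj, hij⟩ := one_lt_card.mp (one_lt_two.trans_le hV)
    have hs : s = ∅ := card_eq_zero.mp (Nat.le_zero.mp hs)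
    rcases hij.lt_or_gt with h | h
    · simpa [hs] using hc i hi j hj h
    · simpa [hs] using hc j hj i hi h
  | succ k ih =>
    obtain ⟨x, hx, a, ha, S, hSV, hS, hxS⟩ := exists_monochromatic_star c hs hV hc
    by_cases hSa : ∃ j ∈ S, ∃ l ∈ S, j < l ∧ c j l = a
    · obtain ⟨j, hj, l, hl, hjl, hcjl⟩ := hSa
      exact ⟨x, hx, j, hSV hj, l, hSV hl, (hxS j hj).1, hjl,
        by rw [(hxS j hj).2, hcjl], by rw [(hxS j hj).2, (hxS l hl).2]⟩
    · push Not at hSa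
      have hcS : ∀ i ∈ S, ∀ j ∈ S, i < j → c i j ∈ s.erase a := fun i hi j hj hij =>
        mem_erase.mpr ⟨hSa i hi j hj hij, hc i (hSV hi) j (hSV hj) hij⟩
      obtain ⟨i, hi, j, hj, l, hl, hmono⟩ :=
        ih (by rw [card_erase_of_mem ha]; omega) hS hcS
      exact ⟨i, hSV hi, j, hSV hj, l, hSV hl, hmono⟩

def factorialSeq : ℕ → ℕ
  | 0 => 1
  | n + 1 => factorialSeq n + (factorialSeq n)!

lemma factorialSeq_strictMono : StrictMono factorialSeq :=
  strictMono_nat_of_lt_succ fun n => by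
    simp only [factorialSeq]; linarith [Nat.factorial_pos (factorialSeq n)]

lemma dvd_factorialSeq_sub {d j : ℕ} (hd : 0 < d) (hdj : d ≤ factorialSeq j) {l : ℕ}
    (hjl : j ≤ l) : d ∣ factorialSeq l - factorialSeq j := by
  induction l, hjl using Nat.le_induction with
  | base => simp
  | succ l hjl ih =>
    have hmono := factorialSeq_strictMono.monotone hjl
    have : factorialSeq (l + 1) - factorialSeq j
        = (factorialSeq l - factorialSeq j) + (factorialSeq l)! := by
      simp only [factorialSeq]; omega
    rw [this]
    exact dvd_add ih (Nat.dvd_factorial hd (hdj.trans hmono))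

theorem exists_monochromatic_dvd_schur_triple {α : Type*} [DecidableEq α] (g : ℕ → α) (k : ℕ)
    {s : Finset α} (hs : #s ≤ k) (hg : ∀ n, 0 < n → g n ∈ s) :
    ∃ x y, 0 < x ∧ 0 < y ∧ x ∣ y ∧ x + y ≤ factorialSeq (triangleRamseyBound k) ∧
      g x = g y ∧ g x = g (x + y) := by
  have hv := factorialSeq_strictMono
  obtain ⟨i, -, j, -, l, hl, hij, hjl, hxy, hxz⟩ :=
    exists_monochromatic_triangle_s9 (fun i j => g (factorialSeq j - factorialSeq i)) k hs
      (V := range (triangleRamseyBound k)) (by simp)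
      (fun i _ j _ hij => hg _ (Nat.sub_pos_of_lt (hv hij)))
  have hvl := hv.monotone (mem_range.mp hl).le
  have hsum : factorialSeq j - factorialSeq i + (factorialSeq l - factorialSeq j)
      = factorialSeq l - factorialSeq i := by
    have := hv hij; have := hv hjl; omega
  refine ⟨_, _, Nat.sub_pos_of_lt (hv hij), Nat.sub_pos_of_lt (hv hjl),
    dvd_factorialSeq_sub (Nat.sub_pos_of_lt (hv hij)) (Nat.sub_le _ _) hjl.le, ?_, hxy, ?_⟩
  · rw [hsum]; exact (Nat.sub_le _ _).trans hvl
  · rwa [hsum]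

theorem stmt_9 (k : ℕ) (hk : 0 < k) :
    ∃ c₀ : ℕ, ∀ f : ℕ → ℂ,
      (∀ m n : ℕ, 0 < m → 0 < n → f (m * n) = f m * f n) →
      (∀ n : ℕ, 0 < n → f n ^ k = 1) →
      ∃ a : ℕ, 0 < a ∧ a ≤ c₀ ∧ f a = 1 ∧ f (a + 1) = 1 := by
  refine ⟨factorialSeq (triangleRamseyBound k), fun f hmul hpow => ?_⟩
  have hroots : #(Polynomial.nthRootsFinset k (1 : ℂ)) = k :=
    (Complex.isPrimitiveRoot_exp k hk.ne').card_nthRootsFinset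
  obtain ⟨x, y, hx, hy, ⟨d, rfl⟩, hbound, hfy, hfz⟩ :=
    exists_monochromatic_dvd_schur_triple f k hroots.le
      (fun n hn => (Polynomial.mem_nthRootsFinset hk 1).mpr (hpow n hn))
  have hd : 0 < d := Nat.pos_of_mul_pos_left hy
  have hfx : f x ≠ 0 := fun h => by simpa [h, hk.ne'] using hpow x hx
  refine ⟨d, hd, le_trans (Nat.le_mul_of_pos_left d hx) (by omega), ?_, ?_⟩
  · rwa [hmul x d hx hd, eq_comm, mul_eq_left₀ hfx] at hfy
  · rwa [show x + x * d = x * (d + 1) by ring, hmul x (d + 1) hx d.succ_pos, eq_comm,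
      mul_eq_left₀ hfx] at hfz
end

section
/- For every prime p > 5, there exist consecutive quadratic residues modulo p: integers r, r+1 with 0 < r < r+1 < p such that both r and r+1 are nonzero squares modulo p. -/
/-!
Since the quadratic character is multiplicative, the product of two non-squares is a square.
Hence one of `2`, `5`, `10` is a square modulo `p`, and then `(1, 2)`, `(4, 5)` or `(9, 10)`
is a pair of consecutive quadratic residues. The last pair needs `p > 10`; it is only reached
when `p ≠ 7`, because `2 ≡ 3 ^ 2 (mod 7)`.
-/

theorem FiniteField.isSquare_mul_of_not_isSquare {F : Type*} [Field F] [Fintype F]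
    [DecidableEq F] {a b : F} (ha : ¬IsSquare a) (hb : ¬IsSquare b) : IsSquare (a * b) := by
  have ha0 : a ≠ 0 := fun h => ha (h ▸ IsSquare.zero)
  have hb0 : b ≠ 0 := fun h => hb (h ▸ IsSquare.zero)
  rw [← quadraticChar_one_iff_isSquare (mul_ne_zero ha0 hb0), map_mul,
    quadraticChar_neg_one_iff_not_isSquare.mpr ha, quadraticChar_neg_one_iff_not_isSquare.mpr hb]
  norm_num

theorem exists_ne_zero_sq_eq_of_isSquare {M : Type*} [MonoidWithZero M] {a : M}
    (ha : IsSquare a) (ha0 : a ≠ 0) : ∃ s : M, s ≠ 0 ∧ s ^ 2 = a := by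
  obtain ⟨s, rfl⟩ := ha
  exact ⟨s, by rintro rfl; simp at ha0, sq s⟩

theorem ZMod.natCast_ne_zero_of_pos_of_lt {p n : ℕ} (h0 : 0 < n) (hn : n < p) :
    (n : ZMod p) ≠ 0 := by
  rw [Ne, ZMod.natCast_eq_zero_iff]
  exact Nat.not_dvd_of_pos_of_lt h0 hn

def IsConsecutiveResiduePair (p r : ℕ) : Prop :=
  0 < r ∧ r + 1 < p ∧
    (∃ s : ZMod p, s ≠ 0 ∧ s ^ 2 = (r : ZMod p)) ∧
    (∃ s : ZMod p, s ≠ 0 ∧ s ^ 2 = ((r + 1 : ℕ) : ZMod p))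

theorem isConsecutiveResiduePair_of_isSquare {p r : ℕ} (hr : 0 < r) (hrp : r + 1 < p)
    (hsq : IsSquare (r : ZMod p)) (hsq' : IsSquare ((r + 1 : ℕ) : ZMod p)) :
    IsConsecutiveResiduePair p r :=
  ⟨hr, hrp, exists_ne_zero_sq_eq_of_isSquare hsq (ZMod.natCast_ne_zero_of_pos_of_lt hr (by omega)),
    exists_ne_zero_sq_eq_of_isSquare hsq' (ZMod.natCast_ne_zero_of_pos_of_lt (by omega) hrp)⟩

theorem isConsecutiveResiduePair_of_sq_eq {p r k : ℕ} (hr : 0 < r) (hrp : r + 1 < p)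
    (hk : ((k ^ 2 : ℕ) : ZMod p) = r) (hsq' : IsSquare ((r + 1 : ℕ) : ZMod p)) :
    IsConsecutiveResiduePair p r :=
  isConsecutiveResiduePair_of_isSquare hr hrp ⟨k, by rw [← hk]; push_cast; ring⟩ hsq'

theorem stmt_18 (p : ℕ) (hp : p.Prime) (hp5 : p > 5) :
    ∃ r : ℕ, 0 < r ∧ r + 1 < p ∧
      (∃ s : ZMod p, s ≠ 0 ∧ s ^ 2 = (r : ZMod p)) ∧
      (∃ s : ZMod p, s ≠ 0 ∧ s ^ 2 = ((r + 1 : ℕ) : ZMod p)) := by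
  have : Fact p.Prime := ⟨hp⟩
  by_cases h2 : IsSquare ((2 : ℕ) : ZMod p)
  · exact ⟨1, isConsecutiveResiduePair_of_sq_eq (k := 1) one_pos (by omega) rfl h2⟩
  by_cases h5 : IsSquare ((5 : ℕ) : ZMod p)
  · exact ⟨4, isConsecutiveResiduePair_of_sq_eq (k := 2) (by norm_num) (by omega) rfl h5⟩
  have hp7 : p ≠ 7 := by
    rintro rfl
    exact h2 ⟨3, rfl⟩
  have hp11 : 11 ≤ p := by
    by_contra! h
    interval_cases p <;> first | omega | norm_num at hp
  have h10 : IsSquare ((10 : ℕ) : ZMod p) := by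
    rw [show (10 : ℕ) = 2 * 5 from rfl, Nat.cast_mul]
    exact FiniteField.isSquare_mul_of_not_isSquare h2 h5
  exact ⟨9, isConsecutiveResiduePair_of_sq_eq (k := 3) (by norm_num) (by omega) rfl h10⟩
end
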